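/- Let α₁, α₂, α₃ be positive integers, β₁, β₂, β₃ integers with gcd(αᵢ, βᵢ) = 1, and suppose β₁/α₁ + β₂/α₂ + β₃/α₃ = 0. Let r₁, r₂, α₁', β₁', β₂' be integers. If the determinant of the pair of vectors (α₃, β₃) and (k·α₁α₂ + r₁α₁ + α₁', k·(−α₂β₁ − α₁β₂) + (1 − r₁β₁ − β₁' − r₂β₂ − β₂')) equals 1, then the determinant of (α₁α₂, −α₂β₁ − α₁β₂) and (r₁α₁ + α₁', 1 − r₁β₁ − β₁' − r₂β₂ − β₂') equals α₁α₂/α₃. -/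
import Mathlib

/-- If `β₁/α₁ + β₂/α₂ + β₃/α₃ = 0` and the determinant of `(α₃, β₃)` and
`(k·α₁α₂ + r₁α₁ + α₁', k·(−α₂β₁ − α₁β₂) + (1 − r₁β₁ − β₁' − r₂β₂ − β₂'))` equals `1`,
then `α₃` divides `α₁α₂` and the determinant of `(α₁α₂, −α₂β₁ − α₁β₂)` and
`(r₁α₁ + α₁', 1 − r₁β₁ − β₁' − r₂β₂ − β₂')` equals `α₁α₂/α₃`. -/
theorem stmt_6 (α₁ α₂ α₃ β₁ β₂ β₃ r₁ r₂ α₁' β₁' β₂' k : ℤ)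
    (hα₁ : 0 < α₁) (hα₂ : 0 < α₂) (hα₃ : 0 < α₃)
    (h₁ : Int.gcd α₁ β₁ = 1) (h₂ : Int.gcd α₂ β₂ = 1) (h₃ : Int.gcd α₃ β₃ = 1)
    (hsum : (β₁ : ℚ) / α₁ + (β₂ : ℚ) / α₂ + (β₃ : ℚ) / α₃ = 0)
    (hdet : α₃ * (k * (-α₂ * β₁ - α₁ * β₂) + (1 - r₁ * β₁ - β₁' - r₂ * β₂ - β₂')) -
        β₃ * (k * (α₁ * α₂) + (r₁ * α₁ + α₁')) = 1) :
    α₃ ∣ α₁ * α₂ ∧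
      (α₁ * α₂) * (1 - r₁ * β₁ - β₁' - r₂ * β₂ - β₂') -
          (-α₂ * β₁ - α₁ * β₂) * (r₁ * α₁ + α₁') = α₁ * α₂ / α₃ := by
  have hq : (β₁ : ℚ) * α₂ * α₃ + β₂ * α₁ * α₃ + β₃ * α₁ * α₂ = 0 := by
    have h1 : (α₁ : ℚ) ≠ 0 := by exact_mod_cast hα₁.ne'
    have h2 : (α₂ : ℚ) ≠ 0 := by exact_mod_cast hα₂.ne'
    have h3 : (α₃ : ℚ) ≠ 0 := by exact_mod_cast hα₃.ne'
    field_simp at hsum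
    linear_combination hsum
  have hz : β₁ * α₂ * α₃ + β₂ * α₁ * α₃ + β₃ * α₁ * α₂ = 0 := by exact_mod_cast hq
  -- α₃ * M = β₃ * A
  have hMA : α₃ * (-α₂ * β₁ - α₁ * β₂) = β₃ * (α₁ * α₂) := by linarith
  set B := 1 - r₁ * β₁ - β₁' - r₂ * β₂ - β₂' with hB
  set C := r₁ * α₁ + α₁' with hC
  have hBC : α₃ * B - β₃ * C = 1 := by linear_combination hdet - k * hMA
  have key : α₃ * ((α₁ * α₂) * B - (-α₂ * β₁ - α₁ * β₂) * C) = α₁ * α₂ := by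
    linear_combination (α₁ * α₂) * hBC - C * hMA
  refine ⟨⟨_, key.symm⟩, ?_⟩
  conv_rhs => rw [← key, Int.mul_ediv_cancel_left _ hα₃.ne']
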